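/- arXiv:2407.10212 — 4 statements merged into one kernel-verified Lean document; each statement's English description precedes it below -/
import Mathlib

section
/- Let L : V → W be a linear isomorphism. If G₂(v,v) ≥ G₁(v,v) for all v ∈ V, then ‖L‖_{tr,2} ≤ ‖L‖_{tr,1}. -/
/-!
By the spectral theorem there is a basis `e` of `V` that is orthonormal for `G₁` and orthogonal
for `G₂`, say `G₂ (e i) (e i) = μ i`; the hypothesis gives `μ i ≥ 1`. If `Q` is an isometry onto `(V, G₂)`
and `D` is the diagonal map `e i ↦ ±√(μ i) • e i`, then `D ∘ Q` is an isometry onto `(V, G₁)`.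
Choosing each sign as that of the `i`-th diagonal entry of `Q ∘ L` in the basis `e` gives
`tr (D ∘ Q ∘ L) = ∑ i, √(μ i) * |(Q ∘ L)ᵢᵢ| ≥ tr (Q ∘ L)`.
-/

open scoped RealInnerProductSpace

open Module Matrix

theorem Real.sSup_nonneg_of_forall_neg_mem {s : Set ℝ} (hs : ∀ x ∈ s, -x ∈ s) :
    0 ≤ sSup s := by
  by_cases hbdd : BddAbove s
  · obtain rfl | ⟨x, hx⟩ := s.eq_empty_or_nonempty
    · simp
    · linarith [le_csSup hbdd hx, le_csSup hbdd (hs x hx)]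
  · rw [Real.sSup_of_not_bddAbove hbdd]

theorem Matrix.trace_toLin_diagonal_comp {R M ι : Type*} [CommSemiring R] [AddCommMonoid M]
    [Module R M] [Fintype ι] [DecidableEq ι] (e : Basis ι R M) (s : ι → R) (f : M →ₗ[R] M) :
    LinearMap.trace R M (toLin e e (diagonal s) ∘ₗ f) =
      ∑ i, s i * LinearMap.toMatrix e e f i i := by
  rw [LinearMap.trace_eq_matrix_trace R e, LinearMap.toMatrix_comp e e e,
    LinearMap.toMatrix_toLin]
  simp [Matrix.trace]

namespace LinearMap.BilinForm

variable {V : Type*} [AddCommGroup V] [Module ℝ V]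

theorem exists_basis_toMatrix_eq_one [FiniteDimensional ℝ V] {G : LinearMap.BilinForm ℝ V}
    (hG : G.IsSymm) (hpos : ∀ v, v ≠ 0 → 0 < G v v) :
    ∃ b : Basis (Fin (finrank ℝ V)) ℝ V, toMatrix b G = 1 := by
  obtain ⟨v, hv⟩ := exists_orthogonal_basis (isSymm_iff.1 hG)
  have hvpos (i) : 0 < G (v i) (v i) := hpos _ (v.ne_zero i)
  refine ⟨v.unitsSMul fun i ↦ .mk0 (√(G (v i) (v i)))⁻¹
    (inv_pos.2 (Real.sqrt_pos.2 (hvpos i))).ne', ?_⟩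
  ext i j
  rcases eq_or_ne i j with rfl | hij
  · simp [Basis.unitsSMul_apply, ← mul_assoc, ← sq, (hvpos i).le, (hvpos i).ne']
  · simp [Basis.unitsSMul_apply, hij, hv hij]

theorem exists_basis_toMatrix_eq_one_and_diagonal [FiniteDimensional ℝ V]
    {G₁ G₂ : LinearMap.BilinForm ℝ V} (hG₁ : G₁.IsSymm) (hG₁pos : ∀ v, v ≠ 0 → 0 < G₁ v v)
    (hG₂ : G₂.IsSymm) :
    ∃ (e : Basis (Fin (finrank ℝ V)) ℝ V) (μ : Fin (finrank ℝ V) → ℝ),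
      toMatrix e G₁ = 1 ∧ toMatrix e G₂ = diagonal μ := by
  obtain ⟨b, hb⟩ := exists_basis_toMatrix_eq_one hG₁ hG₁pos
  have hM : (toMatrix b G₂).IsHermitian :=
    isHermitian_iff_isSymm.2 ((isSymm_toMatrix_iff_isSymm b).2 hG₂)
  set U := hM.eigenvectorUnitary
  let e := hM.eigenvectorBasis.toBasis.map ((WithLp.linearEquiv 2 ℝ _).trans b.equivFun.symm)
  have he : b.toMatrix e = U := by
    ext i j
    simp [e, Basis.toMatrix_apply, U, Finsupp.single_apply]
  refine ⟨e, hM.eigenvalues, ?_, ?_⟩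
  · rw [← toMatrix_mul_basis_toMatrix b, hb, he, mul_one,
      ← conjTranspose_eq_transpose_of_trivial]
    exact Unitary.coe_star_mul_self U
  · rw [← toMatrix_mul_basis_toMatrix b, he]
    simpa [U, star_eq_conjTranspose, conjTranspose_eq_transpose_of_trivial]
      using hM.conjStarAlgAut_star_eigenvectorUnitary

variable {ι : Type*} [Fintype ι] [DecidableEq ι]

theorem apply_basis_eq_repr_of_toMatrix_eq_one {G : LinearMap.BilinForm ℝ V}
    (e : Basis ι ℝ V) (he : toMatrix e G = 1) (u : V) (i : ι) : G u (e i) = e.repr u i := by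
  rw [← Matrix.toBilin_toMatrix e G, he]
  simp [one_apply, Finsupp.single_apply]

theorem exists_surjective_comp_eq_and_trace_le {G₁ G₂ : LinearMap.BilinForm ℝ V}
    (e : Basis ι ℝ V) {μ : ι → ℝ} (he₁ : toMatrix e G₁ = 1) (he₂ : toMatrix e G₂ = diagonal μ)
    (hμ : ∀ i, 1 ≤ μ i) (f : V →ₗ[ℝ] V) :
    ∃ D : V →ₗ[ℝ] V, Function.Surjective D ∧ G₁.comp D D = G₂ ∧
      LinearMap.trace ℝ V f ≤ LinearMap.trace ℝ V (D ∘ₗ f) := by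
  set m := fun i ↦ LinearMap.toMatrix e e f i i
  set s : ι → ℝ := fun i ↦ if 0 ≤ m i then √(μ i) else -√(μ i)
  have hsq (i) : s i * s i = μ i := by
    have := Real.mul_self_sqrt (zero_le_one.trans (hμ i))
    dsimp only [s]
    split_ifs <;> simp [this]
  have hdet : IsUnit (diagonal s).det := by
    refine isUnit_iff_ne_zero.2 (det_diagonal (d := s) ▸ Finset.prod_ne_zero_iff.2 fun i _ h ↦ ?_)
    linarith [hsq i, hμ i, h ▸ hsq i]
  refine ⟨toLin e e (diagonal s), (toLinearEquiv e _ hdet).surjective, ?_, ?_⟩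
  · apply (toMatrix e).injective
    rw [toMatrix_comp e e, LinearMap.toMatrix_toLin, he₁, he₂, diagonal_transpose, mul_one,
      diagonal_mul_diagonal]
    exact congrArg diagonal (funext hsq)
  · rw [trace_toLin_diagonal_comp, LinearMap.trace_eq_matrix_trace ℝ e, Matrix.trace]
    refine Finset.sum_le_sum fun i _ ↦ (?_ : m i ≤ s i * m i)
    have h1 : 1 ≤ √(μ i) := Real.one_le_sqrt.2 (hμ i)
    dsimp only [s]
    split_ifs with h <;> nlinarith

variable {W : Type*} [NormedAddCommGroup W] [InnerProductSpace ℝ W]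

/-- The trace norm of `L` with respect to `G` is `sSup (isometryTraces G L)`. -/
def isometryTraces (G : LinearMap.BilinForm ℝ V) (L : V →ₗ[ℝ] W) : Set ℝ :=
  {t | ∃ Q : W →ₗ[ℝ] V, Function.Surjective Q ∧ (∀ x y : W, G (Q x) (Q y) = ⟪x, y⟫) ∧
    t = LinearMap.trace ℝ V (Q ∘ₗ L)}

variable {L : V →ₗ[ℝ] W}

theorem neg_mem_isometryTraces {G : LinearMap.BilinForm ℝ V} {t : ℝ}
    (ht : t ∈ isometryTraces G L) : -t ∈ isometryTraces G L := by
  obtain ⟨Q, hQ, hQG, rfl⟩ := ht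
  refine ⟨-Q, fun v ↦ ?_, fun x y ↦ by simpa using hQG x y, by simp⟩
  obtain ⟨w, rfl⟩ := hQ v
  exact ⟨-w, by simp⟩

theorem bddAbove_isometryTraces {G : LinearMap.BilinForm ℝ V} (e : Basis ι ℝ V)
    (he : toMatrix e G = 1) : BddAbove (isometryTraces G L) := by
  refine ⟨∑ i, ‖L (e i)‖, ?_⟩
  rintro _ ⟨Q, hQ, hQG, rfl⟩
  rw [LinearMap.trace_eq_matrix_trace ℝ e, Matrix.trace]
  refine Finset.sum_le_sum fun i _ ↦ ?_
  obtain ⟨w, hw⟩ := hQ (e i)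
  have hw1 : ‖w‖ = 1 := by
    rw [norm_eq_sqrt_real_inner, ← hQG, hw, apply_basis_eq_repr_of_toMatrix_eq_one e he]
    simp
  calc LinearMap.toMatrix e e (Q ∘ₗ L) i i = G (Q (L (e i))) (Q w) := by
        rw [hw, apply_basis_eq_repr_of_toMatrix_eq_one e he, LinearMap.toMatrix_apply]
        rfl
    _ = ⟪L (e i), w⟫ := hQG _ _
    _ ≤ ‖L (e i)‖ := by simpa [hw1] using real_inner_le_norm (L (e i)) w

theorem exists_le_mem_isometryTraces {G₁ G₂ : LinearMap.BilinForm ℝ V} (e : Basis ι ℝ V)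
    {μ : ι → ℝ} (he₁ : toMatrix e G₁ = 1) (he₂ : toMatrix e G₂ = diagonal μ)
    (hμ : ∀ i, 1 ≤ μ i) {t : ℝ} (ht : t ∈ isometryTraces G₂ L) :
    ∃ t' ∈ isometryTraces G₁ L, t ≤ t' := by
  obtain ⟨Q, hQ, hQG, rfl⟩ := ht
  obtain ⟨D, hD, hDG, htr⟩ := exists_surjective_comp_eq_and_trace_le e he₁ he₂ hμ (Q ∘ₗ L)
  exact ⟨_, ⟨D ∘ₗ Q, hD.comp hQ, fun x y ↦ by rw [← hQG, ← hDG]; rfl, rfl⟩, htr⟩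

end LinearMap.BilinForm

open LinearMap.BilinForm

theorem traceNorm_le_of_inner_le_general
    {V W : Type*} [AddCommGroup V] [Module ℝ V] [FiniteDimensional ℝ V]
    [NormedAddCommGroup W] [InnerProductSpace ℝ W]
    (G₁ G₂ : V →ₗ[ℝ] V →ₗ[ℝ] ℝ)
    (hG₁symm : ∀ x y : V, G₁ x y = G₁ y x)
    (hG₁pos : ∀ v : V, v ≠ 0 → 0 < G₁ v v)
    (hG₂symm : ∀ x y : V, G₂ x y = G₂ y x)
    (L : V ≃ₗ[ℝ] W)
    (hle : ∀ v : V, G₁ v v ≤ G₂ v v) :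
    sSup {t : ℝ | ∃ Q : W →ₗ[ℝ] V, Function.Surjective Q ∧
        (∀ x y : W, G₂ (Q x) (Q y) = ⟪x, y⟫) ∧
        t = LinearMap.trace ℝ V (Q ∘ₗ (L : V →ₗ[ℝ] W))} ≤
      sSup {t : ℝ | ∃ Q : W →ₗ[ℝ] V, Function.Surjective Q ∧
        (∀ x y : W, G₁ (Q x) (Q y) = ⟪x, y⟫) ∧
        t = LinearMap.trace ℝ V (Q ∘ₗ (L : V →ₗ[ℝ] W))} := by
  obtain ⟨e, μ, he₁, he₂⟩ :=
    exists_basis_toMatrix_eq_one_and_diagonal ⟨hG₁symm⟩ hG₁pos ⟨hG₂symm⟩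
  have hμ (i) : 1 ≤ μ i := by
    have h := hle (e i)
    rwa [← toMatrix_apply e, ← toMatrix_apply e, he₁, he₂, one_apply_eq, diagonal_apply_eq] at h
  change sSup (isometryTraces G₂ (L : V →ₗ[ℝ] W)) ≤ sSup (isometryTraces G₁ (L : V →ₗ[ℝ] W))
  refine Real.sSup_le (fun t ht ↦ ?_)
    (Real.sSup_nonneg_of_forall_neg_mem fun _ ↦ neg_mem_isometryTraces)
  obtain ⟨t', ht', htt'⟩ := exists_le_mem_isometryTraces e he₁ he₂ hμ ht
  exact htt'.trans (le_csSup (bddAbove_isometryTraces e he₁) ht')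

/-- Let `V` and `W` be finite-dimensional real vector spaces of the same
dimension, `W` equipped with an inner product and `V` equipped with two inner products
`G₁` and `G₂`.  For a linear isomorphism `L : V → W`, the trace norm
`‖L‖_{tr,i} = sup { tr(Q ∘ L) : Q : W → (V, Gᵢ) a linear isometry onto V }`.
If `G₂(v,v) ≥ G₁(v,v)` for all `v`, then `‖L‖_{tr,2} ≤ ‖L‖_{tr,1}`. -/
theorem traceNorm_le_of_inner_le
    {V W : Type*} [AddCommGroup V] [Module ℝ V] [FiniteDimensional ℝ V]
    [NormedAddCommGroup W] [InnerProductSpace ℝ W] [FiniteDimensional ℝ W]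
    (hdim : Module.finrank ℝ V = Module.finrank ℝ W)
    (G₁ G₂ : V →ₗ[ℝ] V →ₗ[ℝ] ℝ)
    (hG₁symm : ∀ x y : V, G₁ x y = G₁ y x)
    (hG₁pos : ∀ v : V, v ≠ 0 → 0 < G₁ v v)
    (hG₂symm : ∀ x y : V, G₂ x y = G₂ y x)
    (hG₂pos : ∀ v : V, v ≠ 0 → 0 < G₂ v v)
    (L : V ≃ₗ[ℝ] W)
    (hle : ∀ v : V, G₁ v v ≤ G₂ v v) :
    sSup {t : ℝ | ∃ Q : W →ₗ[ℝ] V, Function.Surjective Q ∧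
        (∀ x y : W, G₂ (Q x) (Q y) = ⟪x, y⟫) ∧
        t = LinearMap.trace ℝ V (Q ∘ₗ (L : V →ₗ[ℝ] W))} ≤
      sSup {t : ℝ | ∃ Q : W →ₗ[ℝ] V, Function.Surjective Q ∧
        (∀ x y : W, G₁ (Q x) (Q y) = ⟪x, y⟫) ∧
        t = LinearMap.trace ℝ V (Q ∘ₗ (L : V →ₗ[ℝ] W))} :=
  traceNorm_le_of_inner_le_general G₁ G₂ hG₁symm hG₁pos hG₂symm L hle
end

section
/- Let L : V → W be a linear isomorphism and suppose G₂(v,v) ≥ G₁(v,v) for all v ∈ V. Then ‖L‖_{tr,2} = ‖L‖_{tr,1} if and only if G₁ = G₂. -/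
open scoped RealInnerProductSpace
open Module LinearMap

/-!
Make `V` an inner product space through `G`. With a singular value decomposition
`L vᵢ = σᵢ wᵢ` (`σᵢ > 0`, `(vᵢ)`, `(wᵢ)` orthonormal bases), every contraction `C : W → V` has
`tr (C L) = ∑ σᵢ ⟪vᵢ, C wᵢ⟫ ≤ ∑ σᵢ`, with equality only if `C wᵢ = vᵢ` for all `i`: the trace norm
is attained by exactly one contraction, the isometry `wᵢ ↦ vᵢ`.

If `G₁ ≤ G₂`, the `G₂`-maximizer `Q₂` is a `G₁`-contraction. Equal trace norms make it the
`G₁`-maximizer, hence a `G₁`-isometry as well as a `G₂`-isometry; as `Q₂` is onto, `G₁ = G₂`.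
-/

section InnerProductSpace

variable {E W : Type*} [NormedAddCommGroup E] [InnerProductSpace ℝ E]
  [NormedAddCommGroup W] [InnerProductSpace ℝ W]

theorem LinearEquiv.exists_orthonormalBasis_apply_eq_smul [FiniteDimensional ℝ E]
    (L : E ≃ₗ[ℝ] W) :
    ∃ (v : OrthonormalBasis (Fin (finrank ℝ E)) ℝ E) (w : OrthonormalBasis (Fin (finrank ℝ E)) ℝ W)
      (σ : Fin (finrank ℝ E) → ℝ), (∀ i, 0 < σ i) ∧ ∀ i, L (v i) = σ i • w i := by
  have := L.finiteDimensional
  have hT : (adjoint (L : E →ₗ[ℝ] W) ∘ₗ (L : E →ₗ[ℝ] W)).IsSymmetric :=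
    (L : E →ₗ[ℝ] W).isPositive_adjoint_comp_self.isSymmetric
  set v := hT.eigenvectorBasis rfl
  set σ : Fin (finrank ℝ E) → ℝ := fun i => ‖L (v i)‖
  have hσ : ∀ i, 0 < σ i := fun i => norm_pos_iff.2 (L.map_ne_zero_iff.2 (v.toBasis.ne_zero i))
  -- `L` maps the eigenvectors of `L* L` to orthogonal vectors
  have horth : Pairwise fun i j => ⟪L (v i), L (v j)⟫ = 0 := by
    intro i j hij
    have hv : adjoint (L : E →ₗ[ℝ] W) (L (v i)) = hT.eigenvalues rfl i • v i :=
      hT.apply_eigenvectorBasis rfl i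
    have := adjoint_inner_left (L : E →ₗ[ℝ] W) (v j) (L (v i))
    rwa [coe_coe, hv, real_inner_smul_left, v.orthonormal.2 hij, mul_zero, eq_comm] at this
  set w' : Fin (finrank ℝ E) → W := fun i => (σ i)⁻¹ • L (v i)
  have hw' : Orthonormal ℝ w' := by
    refine ⟨fun i => ?_, fun i j hij => ?_⟩
    · simp [w', norm_smul, σ, (hσ i).ne']
    · simp [w', real_inner_smul_left, real_inner_smul_right, horth hij]
  let w : OrthonormalBasis (Fin (finrank ℝ E)) ℝ W := OrthonormalBasis.mk hw'
    (hw'.linearIndependent.span_eq_top_of_card_eq_finrank' (by simp [L.finrank_eq])).ge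
  refine ⟨v, w, σ, hσ, fun i => ?_⟩
  simp [w, w', smul_smul, (hσ i).ne']

theorem trace_comp_eq_sum_mul_inner {ι : Type*} [Fintype ι] {L : E →ₗ[ℝ] W}
    {v : OrthonormalBasis ι ℝ E} {w : ι → W} {σ : ι → ℝ} (hL : ∀ i, L (v i) = σ i • w i)
    (C : W →ₗ[ℝ] E) : trace ℝ E (C ∘ₗ L) = ∑ i, σ i * ⟪v i, C (w i)⟫ := by
  simp [trace_eq_sum_inner _ v, hL, real_inner_smul_right]

theorem LinearEquiv.exists_isometry_maximizing_trace_comp [FiniteDimensional ℝ E]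
    (L : E ≃ₗ[ℝ] W) :
    ∃ Q₀ : W ≃ₗᵢ[ℝ] E, ∀ C : W →ₗ[ℝ] E, (∀ x, ‖C x‖ ≤ ‖x‖) →
      trace ℝ E (C ∘ₗ L) ≤ trace ℝ E (Q₀.toLinearMap ∘ₗ L) ∧
      (trace ℝ E (C ∘ₗ L) = trace ℝ E (Q₀.toLinearMap ∘ₗ L) → C = Q₀.toLinearMap) := by
  obtain ⟨v, w, σ, hσ, hL⟩ := L.exists_orthonormalBasis_apply_eq_smul
  set Q₀ : W ≃ₗᵢ[ℝ] E := w.repr.trans v.repr.symm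
  have hQ₀ : ∀ i, Q₀ (w i) = v i := by simp [Q₀]
  have htrQ₀ : trace ℝ E (Q₀.toLinearMap ∘ₗ L) = ∑ i, σ i * 1 := by
    rw [trace_comp_eq_sum_mul_inner hL]
    simp [hQ₀]
  have hterm : ∀ C : W →ₗ[ℝ] E, (∀ x, ‖C x‖ ≤ ‖x‖) → ∀ i, σ i * ⟪v i, C (w i)⟫ ≤ σ i * 1 :=
    fun C hC i => mul_le_mul_of_nonneg_left
      ((real_inner_le_norm _ _).trans (by simpa using hC (w i))) (hσ i).le
  refine ⟨Q₀, fun C hC => ⟨?_, fun heq => ?_⟩⟩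
  · rw [trace_comp_eq_sum_mul_inner hL, htrQ₀]
    exact Finset.sum_le_sum fun i _ => hterm C hC i
  · rw [trace_comp_eq_sum_mul_inner hL, htrQ₀,
      Finset.sum_eq_sum_iff_of_le fun i _ => hterm C hC i] at heq
    refine w.toBasis.ext fun i => ?_
    have hinner : ⟪v i, C (w i)⟫ = 1 := mul_left_cancel₀ (hσ i).ne' (heq i (Finset.mem_univ i))
    change C (w i) = Q₀ (w i)
    rw [hQ₀]
    exact eq_of_norm_le_re_inner_eq_norm_sq (by simpa using hC (w i))
      (by rw [RCLike.re_to_real, real_inner_comm, hinner, v.orthonormal.1 i, one_pow])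

end InnerProductSpace

@[reducible] noncomputable def LinearMap.BilinForm.toInnerProductSpaceCore {V : Type*}
    [AddCommGroup V] [Module ℝ V] (G : V →ₗ[ℝ] V →ₗ[ℝ] ℝ) (hs : ∀ x y, G x y = G y x)
    (hp : ∀ v, v ≠ 0 → 0 < G v v) : InnerProductSpace.Core ℝ V where
  inner x y := G x y
  conj_inner_symm x y := hs y x
  re_inner_nonneg x := by
    rcases eq_or_ne x 0 with rfl | hx
    · simp
    · simpa using (hp x hx).le
  add_left x y z := by simp
  smul_left x y r := by simp
  definite x h := by contrapose! h; exact (hp x h).ne'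

section BilinForm

variable {V W : Type*} [AddCommGroup V] [Module ℝ V]
  [NormedAddCommGroup W] [InnerProductSpace ℝ W]

theorem LinearMap.BilinForm.exists_isometry_maximizing_trace_comp [FiniteDimensional ℝ V]
    (G : V →ₗ[ℝ] V →ₗ[ℝ] ℝ) (hs : ∀ x y, G x y = G y x) (hp : ∀ v, v ≠ 0 → 0 < G v v)
    (L : V ≃ₗ[ℝ] W) :
    ∃ Q₀ : W →ₗ[ℝ] V, Function.Surjective Q₀ ∧ (∀ x y, G (Q₀ x) (Q₀ y) = ⟪x, y⟫) ∧
      ∀ C : W →ₗ[ℝ] V, (∀ x, G (C x) (C x) ≤ ⟪x, x⟫) →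
        trace ℝ V (C ∘ₗ L) ≤ trace ℝ V (Q₀ ∘ₗ L) ∧
        (trace ℝ V (C ∘ₗ L) = trace ℝ V (Q₀ ∘ₗ L) → C = Q₀) := by
  let c := LinearMap.BilinForm.toInnerProductSpaceCore G hs hp
  let : NormedAddCommGroup V := c.toNormedAddCommGroup
  let : InnerProductSpace ℝ V := .ofCore c.toCore
  obtain ⟨Q₀, hQ₀⟩ := L.exists_isometry_maximizing_trace_comp
  refine ⟨Q₀.toLinearMap, Q₀.surjective, Q₀.inner_map_map, fun C hC => hQ₀ C fun x => ?_⟩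
  rw [← sq_le_sq₀ (norm_nonneg _) (norm_nonneg _), ← real_inner_self_eq_norm_sq,
    ← real_inner_self_eq_norm_sq]
  exact hC x

theorem sSup_trace_comp_isometry_eq {G : V →ₗ[ℝ] V →ₗ[ℝ] ℝ} {L : V ≃ₗ[ℝ] W} {Q₀ : W →ₗ[ℝ] V}
    (hQ₀ : Function.Surjective Q₀) (hiso : ∀ x y, G (Q₀ x) (Q₀ y) = ⟪x, y⟫)
    (hmax : ∀ Q : W →ₗ[ℝ] V, (∀ x y, G (Q x) (Q y) = ⟪x, y⟫) →
      trace ℝ V (Q ∘ₗ L) ≤ trace ℝ V (Q₀ ∘ₗ L)) :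
    sSup {t : ℝ | ∃ Q : W →ₗ[ℝ] V, Function.Surjective Q ∧ (∀ x y, G (Q x) (Q y) = ⟪x, y⟫) ∧
      t = trace ℝ V (Q ∘ₗ (L : V →ₗ[ℝ] W))} = trace ℝ V (Q₀ ∘ₗ L) :=
  IsGreatest.csSup_eq ⟨⟨Q₀, hQ₀, hiso, rfl⟩, by rintro t ⟨Q, -, hQ, rfl⟩; exact hmax Q hQ⟩

end BilinForm

theorem traceNorm_eq_iff_inner_eq_general
    {V W : Type*} [AddCommGroup V] [Module ℝ V] [FiniteDimensional ℝ V]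
    [NormedAddCommGroup W] [InnerProductSpace ℝ W]
    (G₁ G₂ : V →ₗ[ℝ] V →ₗ[ℝ] ℝ)
    (hG₁symm : ∀ x y : V, G₁ x y = G₁ y x)
    (hG₁pos : ∀ v : V, v ≠ 0 → 0 < G₁ v v)
    (hG₂symm : ∀ x y : V, G₂ x y = G₂ y x)
    (hG₂pos : ∀ v : V, v ≠ 0 → 0 < G₂ v v)
    (L : V ≃ₗ[ℝ] W)
    (hle : ∀ v : V, G₁ v v ≤ G₂ v v) :
    (sSup {t : ℝ | ∃ Q : W →ₗ[ℝ] V, Function.Surjective Q ∧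
        (∀ x y : W, G₂ (Q x) (Q y) = ⟪x, y⟫) ∧
        t = LinearMap.trace ℝ V (Q ∘ₗ (L : V →ₗ[ℝ] W))} =
      sSup {t : ℝ | ∃ Q : W →ₗ[ℝ] V, Function.Surjective Q ∧
        (∀ x y : W, G₁ (Q x) (Q y) = ⟪x, y⟫) ∧
        t = LinearMap.trace ℝ V (Q ∘ₗ (L : V →ₗ[ℝ] W))}) ↔ G₁ = G₂ := by
  refine ⟨fun hsup => ?_, by rintro rfl; rfl⟩
  obtain ⟨Q₁, hQ₁surj, hQ₁, hmax₁⟩ := LinearMap.BilinForm.exists_isometry_maximizing_trace_comp G₁ hG₁symm hG₁pos L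
  obtain ⟨Q₂, hQ₂surj, hQ₂, hmax₂⟩ := LinearMap.BilinForm.exists_isometry_maximizing_trace_comp G₂ hG₂symm hG₂pos L
  rw [sSup_trace_comp_isometry_eq hQ₁surj hQ₁ fun Q hQ => (hmax₁ Q fun x => (hQ x x).le).1,
    sSup_trace_comp_isometry_eq hQ₂surj hQ₂ fun Q hQ => (hmax₂ Q fun x => (hQ x x).le).1] at hsup
  have hQ₂contr : ∀ x, G₁ (Q₂ x) (Q₂ x) ≤ ⟪x, x⟫ := fun x => hQ₂ x x ▸ hle (Q₂ x)
  obtain rfl : Q₂ = Q₁ := (hmax₁ Q₂ hQ₂contr).2 hsup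
  ext u u'
  obtain ⟨x, rfl⟩ := hQ₂surj u
  obtain ⟨y, rfl⟩ := hQ₂surj u'
  rw [hQ₁, hQ₂]

/-- With `V, W` finite-dimensional real vector spaces of the same dimension,
`W` carrying an inner product and `V` two inner products `G₁, G₂`, and `L : V → W` a linear
isomorphism with `G₂(v,v) ≥ G₁(v,v)` for all `v`: the trace norms satisfy
`‖L‖_{tr,2} = ‖L‖_{tr,1}` if and only if `G₁ = G₂`. -/
theorem traceNorm_eq_iff_inner_eq
    {V W : Type*} [AddCommGroup V] [Module ℝ V] [FiniteDimensional ℝ V]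
    [NormedAddCommGroup W] [InnerProductSpace ℝ W] [FiniteDimensional ℝ W]
    (hdim : Module.finrank ℝ V = Module.finrank ℝ W)
    (G₁ G₂ : V →ₗ[ℝ] V →ₗ[ℝ] ℝ)
    (hG₁symm : ∀ x y : V, G₁ x y = G₁ y x)
    (hG₁pos : ∀ v : V, v ≠ 0 → 0 < G₁ v v)
    (hG₂symm : ∀ x y : V, G₂ x y = G₂ y x)
    (hG₂pos : ∀ v : V, v ≠ 0 → 0 < G₂ v v)
    (L : V ≃ₗ[ℝ] W)
    (hle : ∀ v : V, G₁ v v ≤ G₂ v v) :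
    (sSup {t : ℝ | ∃ Q : W →ₗ[ℝ] V, Function.Surjective Q ∧
        (∀ x y : W, G₂ (Q x) (Q y) = ⟪x, y⟫) ∧
        t = LinearMap.trace ℝ V (Q ∘ₗ (L : V →ₗ[ℝ] W))} =
      sSup {t : ℝ | ∃ Q : W →ₗ[ℝ] V, Function.Surjective Q ∧
        (∀ x y : W, G₁ (Q x) (Q y) = ⟪x, y⟫) ∧
        t = LinearMap.trace ℝ V (Q ∘ₗ (L : V →ₗ[ℝ] W))}) ↔ G₁ = G₂ :=
  traceNorm_eq_iff_inner_eq_general G₁ G₂ hG₁symm hG₁pos hG₂symm hG₂pos L hle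
end

section
/- For every real n×n matrix A, the supremum of tr(Q·A) over all Q in O(n) equals the sum of the singular values of A, i.e. sup_{Q ∈ O(n)} tr(Q·A) = tr((Aᵀ·A)^{1/2}), where (Aᵀ·A)^{1/2} denotes the positive semidefinite square root of the positive semidefinite matrix Aᵀ·A. -/
/-! Diagonalise `Aᵀ * A` in an orthonormal eigenbasis `(vᵢ)` with eigenvalues `dᵢ`. The vectors
`A vᵢ` are pairwise orthogonal with `‖A vᵢ‖ = √dᵢ`, and computing the trace in the basis `(vᵢ)`
gives `tr (Q A) = ∑ ⟪vᵢ, Q A vᵢ⟫ ≤ ∑ ‖A vᵢ‖` by Cauchy–Schwarz, since `Q` is an isometry.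
Equality is attained by the orthogonal `Q` mapping an orthonormal basis that extends the
normalised nonzero `A vᵢ` back onto `(vᵢ)`. -/

open Matrix

open scoped ComplexOrder in
/-- The positive semidefinite square root of a positive semidefinite matrix, as defined in
Mathlib of December 2024 (removed since). -/
noncomputable def Matrix.PosSemidef.sqrt {𝕜 : Type*} [RCLike 𝕜] {n : Type*} [Fintype n]
    [DecidableEq n] {A : Matrix n n 𝕜} (hA : A.PosSemidef) : Matrix n n 𝕜 :=
  (hA.1.eigenvectorUnitary : Matrix n n 𝕜) *
    diagonal (fun i => ((Real.sqrt (hA.1.eigenvalues i) : ℝ) : 𝕜)) *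
    (star hA.1.eigenvectorUnitary : Matrix n n 𝕜)

open scoped RealInnerProductSpace

theorem orthonormal_inv_norm_smul_of_pairwise_inner_eq_zero {ι E : Type*} [NormedAddCommGroup E]
    [InnerProductSpace ℝ E] {v : ι → E} (hv : Pairwise fun i j => ⟪v i, v j⟫ = 0) :
    Orthonormal ℝ ({i | v i ≠ 0}.domRestrict fun i => ‖v i‖⁻¹ • v i) := by
  classical
  rw [orthonormal_iff_ite]
  rintro ⟨i, hi⟩ ⟨j, hj⟩
  simp only [Set.domRestrict_apply, Subtype.mk.injEq, real_inner_smul_left, real_inner_smul_right]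
  split_ifs with hij
  · subst hij
    rw [real_inner_self_eq_norm_sq]
    have : ‖v i‖ ≠ 0 := norm_ne_zero_iff.mpr hi
    field_simp
  · rw [hv hij, mul_zero, mul_zero]

namespace LinearMap

variable {ι E : Type*} [Fintype ι] [NormedAddCommGroup E] [InnerProductSpace ℝ E]

theorem trace_comp_le_sum_norm (v : OrthonormalBasis ι ℝ E) (T Q : E →ₗ[ℝ] E)
    (hQ : ∀ x, ‖Q x‖ ≤ ‖x‖) : (Q ∘ₗ T).trace ℝ E ≤ ∑ i, ‖T (v i)‖ := by
  rw [trace_eq_sum_inner _ v]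
  refine Finset.sum_le_sum fun i _ => ?_
  calc ⟪v i, Q (T (v i))⟫ ≤ ‖v i‖ * ‖Q (T (v i))‖ := real_inner_le_norm _ _
    _ ≤ ‖T (v i)‖ := by rw [v.orthonormal.1 i, one_mul]; exact hQ _

theorem exists_trace_comp_eq_sum_norm (v : OrthonormalBasis ι ℝ E) (T : E →ₗ[ℝ] E)
    (hT : Pairwise fun i j => ⟪T (v i), T (v j)⟫ = 0) :
    ∃ Q : E ≃ₗᵢ[ℝ] E, (Q.toLinearMap ∘ₗ T).trace ℝ E = ∑ i, ‖T (v i)‖ := by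
  classical
  have := v.toBasis.finiteDimensional_of_finite
  obtain ⟨e, he⟩ := (orthonormal_inv_norm_smul_of_pairwise_inner_eq_zero hT)
    |>.exists_orthonormalBasis_extension_of_card_eq (Module.finrank_eq_card_basis v.toBasis)
  refine ⟨e.equiv v (Equiv.refl ι), ?_⟩
  rw [trace_eq_sum_inner _ v]
  refine Finset.sum_congr rfl fun i _ => ?_
  have hQe : e.equiv v (Equiv.refl ι) (e i) = v i := e.equiv_apply_basis v _ i
  nth_rw 1 [← hQe]
  rw [coe_comp, Function.comp_apply, LinearEquiv.coe_coe,
    LinearIsometryEquiv.coe_toLinearEquiv, LinearIsometryEquiv.inner_map_map]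
  by_cases h : T (v i) = 0
  · simp [h]
  · rw [he i h, real_inner_smul_left, real_inner_self_eq_norm_sq]
    have : ‖T (v i)‖ ≠ 0 := norm_ne_zero_iff.mpr h
    field_simp

end LinearMap

open scoped InnerProductSpace ComplexOrder

namespace Matrix

variable {𝕜 m n : Type*} [RCLike 𝕜] [Fintype n] [DecidableEq n]

theorem trace_eq_trace_toEuclideanLin (M : Matrix n n 𝕜) :
    M.trace = (toEuclideanLin M).trace 𝕜 _ := by
  rw [LinearMap.trace_eq_matrix_trace 𝕜 (EuclideanSpace.basisFun n 𝕜).toBasis,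
    toEuclideanLin_eq_toLin_orthonormal, LinearMap.toMatrix_toLin]

theorem norm_toEuclideanLin_apply_of_mem_unitaryGroup {Q : Matrix n n 𝕜}
    (hQ : Q ∈ unitaryGroup n 𝕜) (x : EuclideanSpace 𝕜 n) : ‖toEuclideanLin Q x‖ = ‖x‖ := by
  rw [← coe_toEuclideanCLM_eq_toEuclideanLin, ContinuousLinearMap.coe_coe]
  exact ContinuousLinearMap.norm_map_of_mem_unitary (Unitary.map_mem toEuclideanCLM hQ) x

theorem exists_mem_unitaryGroup_toEuclideanLin_eq
    (L : EuclideanSpace 𝕜 n ≃ₗᵢ[𝕜] EuclideanSpace 𝕜 n) :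
    ∃ Q ∈ unitaryGroup n 𝕜, toEuclideanLin Q = L.toLinearEquiv := by
  refine ⟨toEuclideanLin.symm L.toLinearEquiv, ?_, LinearEquiv.apply_symm_apply _ _⟩
  rw [toEuclideanLin_eq_toLin_orthonormal, toLin_symm]
  exact L.toMatrix_mem_unitaryGroup _ _

theorem inner_toEuclideanLin_eigenvectorBasis [Fintype m] [DecidableEq m] {A : Matrix m n 𝕜}
    (hA : (Aᴴ * A).IsHermitian) (i j : n) :
    ⟪toEuclideanLin A (hA.eigenvectorBasis i), toEuclideanLin A (hA.eigenvectorBasis j)⟫_𝕜 =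
      if i = j then (hA.eigenvalues i : 𝕜) else 0 := by
  rw [← LinearMap.adjoint_inner_right, ← toEuclideanLin_conjTranspose_eq_adjoint,
    ← LinearMap.comp_apply, ← toLpLin_mul, toLpLin_apply, hA.mulVec_eigenvectorBasis,
    WithLp.toLp_smul, WithLp.toLp_ofLp, RCLike.real_smul_eq_coe_smul (K := 𝕜),
    inner_smul_right, orthonormal_iff_ite.mp hA.eigenvectorBasis.orthonormal]
  split_ifs with h
  · rw [h, mul_one]
  · rw [mul_zero]

theorem norm_toEuclideanLin_eigenvectorBasis [Fintype m] [DecidableEq m] {A : Matrix m n 𝕜}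
    (hA : (Aᴴ * A).IsHermitian) (i : n) :
    ‖toEuclideanLin A (hA.eigenvectorBasis i)‖ = √(hA.eigenvalues i) := by
  rw [norm_eq_sqrt_re_inner (𝕜 := 𝕜), inner_toEuclideanLin_eigenvectorBasis, if_pos rfl,
    RCLike.ofReal_re]

theorem PosSemidef.trace_sqrt {A : Matrix n n 𝕜} (hA : A.PosSemidef) :
    hA.sqrt.trace = ∑ i, (√(hA.1.eigenvalues i) : 𝕜) := by
  rw [PosSemidef.sqrt, trace_mul_cycle, Unitary.coe_star_mul_self, one_mul, trace_diagonal]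

end Matrix

theorem isGreatest_trace_orthogonal_mul {n : Type*} [Fintype n] [DecidableEq n]
    (A : Matrix n n ℝ) (hA : (Aᵀ * A).PosSemidef) :
    IsGreatest {t : ℝ | ∃ Q : Matrix n n ℝ, Qᵀ * Q = 1 ∧ t = (Q * A).trace} hA.sqrt.trace := by
  have hH : (Aᴴ * A).IsHermitian := hA.1
  set v := hH.eigenvectorBasis
  set T := toEuclideanLin A
  have htrace : hA.sqrt.trace = ∑ i, ‖T (v i)‖ := by
    rw [hA.trace_sqrt]
    exact Finset.sum_congr rfl fun i _ => (norm_toEuclideanLin_eigenvectorBasis hH i).symm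
  have horth {Q : Matrix n n ℝ} : Qᵀ * Q = 1 ↔ Q ∈ unitaryGroup n ℝ := by
    rw [mem_unitaryGroup_iff', star_eq_conjTranspose, conjTranspose_eq_transpose_of_trivial]
  refine ⟨?_, ?_⟩
  · obtain ⟨L, hL⟩ := LinearMap.exists_trace_comp_eq_sum_norm v T fun i j hij =>
      (inner_toEuclideanLin_eigenvectorBasis hH i j).trans (if_neg hij)
    obtain ⟨Q, hQ, hQL⟩ := exists_mem_unitaryGroup_toEuclideanLin_eq L
    refine ⟨Q, horth.2 hQ, ?_⟩
    rw [htrace, ← hL, trace_eq_trace_toEuclideanLin, toLpLin_mul_same, hQL]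
  · rintro t ⟨Q, hQ, rfl⟩
    rw [trace_eq_trace_toEuclideanLin, toLpLin_mul_same, htrace]
    exact LinearMap.trace_comp_le_sum_norm v T _ fun x =>
      (norm_toEuclideanLin_apply_of_mem_unitaryGroup (horth.1 hQ) x).le

/-- For every real `n × n` matrix `A`, the supremum of `tr (Q * A)` over all
orthogonal matrices `Q` (i.e. `Qᵀ * Q = 1`) equals the sum of the singular values of `A`,
namely `tr ((Aᵀ * A) ^ (1/2))`, where the positive semidefinite square root of the positive
semidefinite matrix `Aᵀ * A` is used. -/
theorem sup_trace_orthogonal_mul_eq_traceNorm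
    (n : ℕ) (A : Matrix (Fin n) (Fin n) ℝ)
    (hA : (Aᵀ * A).PosSemidef) :
    sSup {t : ℝ | ∃ Q : Matrix (Fin n) (Fin n) ℝ, Qᵀ * Q = 1 ∧ t = (Q * A).trace} =
      hA.sqrt.trace :=
  (isGreatest_trace_orthogonal_mul A hA).csSup_eq
end

section
/- For every σ ∈ [0, s(b)] one has ψ'(σ)/ψ(σ)² = φ'(r(σ))/φ(r(σ)), and the derivative of σ ↦ ψ'(σ)/ψ(σ)² at σ equals φ(r(σ)) · (log ∘ φ)''(r(σ)). Consequently, σ ↦ ψ'(σ)/ψ(σ)² is nonincreasing on [0, s(b)] if and only if (log ∘ φ)'' ≤ 0 on [a,b] (i.e. φ is log-concave). -/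
/-!
The change of variables `σ = s(r)` has `dr/dσ = φ(r)`, so `ψ = φ ∘ r` has `ψ' = φ'(r) φ(r)` and
`ψ'/ψ² = φ'(r)/φ(r) = (log φ)'(r)`. Differentiating once more in `σ` produces the factor
`dr/dσ = φ(r) > 0`, so the sign of the derivative of `ψ'/ψ²` is the sign of `(log φ)''`, and a
function on an interval is antitone exactly when its derivative is nonpositive.
-/

open Set Filter Topology MeasureTheory

theorem hasDerivWithinAt_integral_Icc {E : Type*} [NormedAddCommGroup E] [NormedSpace ℝ E]
    [CompleteSpace E] {f : ℝ → E} {a b x : ℝ} (hf : ContinuousOn f (Icc a b))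
    (hx : x ∈ Icc a b) :
    HasDerivWithinAt (fun u => ∫ t in a..u, f t) (f x) (Icc a b) x := by
  have : Fact (x ∈ Icc a b) := ⟨hx⟩
  have hint : IntervalIntegrable f volume a x :=
    (hf.mono (Icc_subset_Icc_right hx.2)).intervalIntegrable_of_Icc hx.1
  exact intervalIntegral.integral_hasDerivWithinAt_right hint
    (hf.stronglyMeasurableAtFilter_nhdsWithin measurableSet_Icc x) (hf x hx)

theorem strictMonoOn_integral_of_pos {f : ℝ → ℝ} {a b : ℝ} (hf : ContinuousOn f (Icc a b))
    (hpos : ∀ x ∈ Icc a b, 0 < f x) :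
    StrictMonoOn (fun x => ∫ t in a..x, f t) (Icc a b) :=
  strictMonoOn_of_hasDerivWithinAt_pos (convex_Icc a b)
    (fun _ hx => (hasDerivWithinAt_integral_Icc hf hx).continuousWithinAt)
    (fun _ hx => (hasDerivWithinAt_integral_Icc hf (interior_subset hx)).mono interior_subset)
    (fun _ hx => hpos _ (interior_subset hx))

theorem StrictMonoOn.continuousWithinAt_of_surjOn_Icc {α β : Type*} [LinearOrder α]
    [TopologicalSpace α] [OrderTopology α] [LinearOrder β] [TopologicalSpace β] [OrderTopology β]
    {f : α → β} {s : Set α} {a b : β} (hf : StrictMonoOn f s) (hmaps : MapsTo f s (Icc a b))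
    (hsurj : SurjOn f s (Icc a b)) {x : α} (hx : x ∈ s) : ContinuousWithinAt f s x := by
  refine tendsto_order.2 ⟨fun y hy => ?_, fun y hy => ?_⟩
  · rcases lt_or_ge y a with hya | hay
    · filter_upwards [self_mem_nhdsWithin] with z hz using hya.trans_le (hmaps hz).1
    obtain ⟨c, hc, rfl⟩ := hsurj ⟨hay, hy.le.trans (hmaps hx).2⟩
    filter_upwards [self_mem_nhdsWithin,
      mem_nhdsWithin_of_mem_nhds (Ioi_mem_nhds ((hf.lt_iff_lt hc hx).1 hy))] with z hz hcz
    exact hf hc hz hcz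
  · rcases lt_or_ge b y with hby | hyb
    · filter_upwards [self_mem_nhdsWithin] with z hz using (hmaps hz).2.trans_lt hby
    obtain ⟨c, hc, rfl⟩ := hsurj ⟨(hmaps hx).1.trans hy.le, hyb⟩
    filter_upwards [self_mem_nhdsWithin,
      mem_nhdsWithin_of_mem_nhds (Iio_mem_nhds ((hf.lt_iff_lt hx hc).1 hy))] with z hz hzc
    exact hf hz hc hzc

theorem HasDerivWithinAt.of_local_left_inverse {𝕜 : Type*} [NontriviallyNormedField 𝕜]
    {f g : 𝕜 → 𝕜} {f' a : 𝕜} {s t : Set 𝕜} (hg : Tendsto g (𝓝[s] a) (𝓝[t] (g a)))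
    (hf : HasDerivWithinAt f f' t (g a)) (hf' : f' ≠ 0) (ha : a ∈ s)
    (hfg : ∀ᶠ x in 𝓝[s] a, f (g x) = x) : HasDerivWithinAt g f'⁻¹ s a :=
  HasFDerivWithinAt.of_local_left_inverse
    (f' := ContinuousLinearEquiv.unitsEquivAut 𝕜 (Units.mk0 f' hf')) hg hf ha hfg

theorem hasDerivWithinAt_of_invOn_of_strictMonoOn {f f' g : ℝ → ℝ} {a b : ℝ} {s : Set ℝ}
    (hf : StrictMonoOn f (Icc a b))
    (hf' : ∀ x ∈ Icc a b, HasDerivWithinAt f (f' x) (Icc a b) x)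
    (hf'₀ : ∀ x ∈ Icc a b, f' x ≠ 0) (hfs : MapsTo f (Icc a b) s) (hg : MapsTo g s (Icc a b))
    (hinv : InvOn g f (Icc a b) s) {y : ℝ} (hy : y ∈ s) :
    HasDerivWithinAt g (f' (g y))⁻¹ s y := by
  have hg_mono : StrictMonoOn g s := fun y hy z hz hyz =>
    (hf.lt_iff_lt (hg hy) (hg hz)).1 (by rwa [hinv.2 hy, hinv.2 hz])
  have hg_cont : ContinuousWithinAt g s y :=
    hg_mono.continuousWithinAt_of_surjOn_Icc hg (hinv.1.surjOn hfs) hy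
  exact (hf' _ (hg hy)).of_local_left_inverse
    (tendsto_nhdsWithin_iff.2 ⟨hg_cont, eventually_nhdsWithin_of_forall hg⟩)
    (hf'₀ _ (hg hy)) hy (eventually_nhdsWithin_of_forall hinv.2)

theorem antitoneOn_iff_hasDerivWithinAt_nonpos {D : Set ℝ} (hD : Convex ℝ D)
    (hD' : UniqueDiffOn ℝ D) {f f' : ℝ → ℝ} (hf : ∀ x ∈ D, HasDerivWithinAt f (f' x) D x) :
    AntitoneOn f D ↔ ∀ x ∈ D, f' x ≤ 0 :=
  ⟨fun h x hx => (hf x hx).nonpos_of_antitoneOn (hD' x hx).accPt h,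
    fun h => antitoneOn_of_hasDerivWithinAt_nonpos hD (fun x hx => (hf x hx).continuousWithinAt)
      (fun x hx => (hf x (interior_subset hx)).mono interior_subset)
      (fun x hx => h x (interior_subset hx))⟩

theorem warping_logconcavity_reparam_general
    (a b : ℝ) (hab : a < b)
    (φ φ' lφ' lφ'' : ℝ → ℝ)
    (hφpos : ∀ t ∈ Icc a b, 0 < φ t)
    (hφd : ∀ t ∈ Icc a b, HasDerivWithinAt φ (φ' t) (Icc a b) t)
    (hlog1 : ∀ t ∈ Icc a b, HasDerivWithinAt (Real.log ∘ φ) (lφ' t) (Icc a b) t)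
    (hlog2 : ∀ t ∈ Icc a b, HasDerivWithinAt lφ' (lφ'' t) (Icc a b) t)
    (s : ℝ → ℝ) (hs : ∀ x, s x = ∫ t in a..x, (φ t)⁻¹)
    (r : ℝ → ℝ)
    (hrmem : ∀ σ ∈ Icc 0 (s b), r σ ∈ Icc a b)
    (hrs : ∀ x ∈ Icc a b, r (s x) = x)
    (hsr : ∀ σ ∈ Icc 0 (s b), s (r σ) = σ)
    (ψ ψ' : ℝ → ℝ) (hψ : ∀ σ, ψ σ = φ (r σ))
    (hψd : ∀ σ ∈ Icc 0 (s b), HasDerivWithinAt ψ (ψ' σ) (Icc 0 (s b)) σ) :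
    (∀ σ ∈ Icc 0 (s b), ψ' σ / (ψ σ) ^ 2 = φ' (r σ) / φ (r σ)) ∧
    (∀ σ ∈ Icc 0 (s b),
      HasDerivWithinAt (fun τ => ψ' τ / (ψ τ) ^ 2)
        (φ (r σ) * lφ'' (r σ)) (Icc 0 (s b)) σ) ∧
    (AntitoneOn (fun τ => ψ' τ / (ψ τ) ^ 2) (Icc 0 (s b)) ↔
      ∀ t ∈ Icc a b, lφ'' t ≤ 0) := by
  have hr : MapsTo r (Icc 0 (s b)) (Icc a b) := hrmem
  have hφc : ContinuousOn φ (Icc a b) := fun t ht => (hφd t ht).continuousWithinAt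
  have hφinv : ContinuousOn (fun t => (φ t)⁻¹) (Icc a b) := hφc.inv₀ fun t ht => (hφpos t ht).ne'
  have hs_eq : s = fun x => ∫ t in a..x, (φ t)⁻¹ := funext hs
  have hs_mono : StrictMonoOn s (Icc a b) :=
    hs_eq ▸ strictMonoOn_integral_of_pos hφinv fun t ht => inv_pos.2 (hφpos t ht)
  have hsJ : MapsTo s (Icc a b) (Icc 0 (s b)) := by
    simpa [hs a] using hs_mono.monotoneOn.mapsTo_Icc
  have hsb : 0 < s b := by
    simpa [hs a] using hs_mono (left_mem_Icc.2 hab.le) (right_mem_Icc.2 hab.le) hab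
  have hr' : ∀ σ ∈ Icc 0 (s b), HasDerivWithinAt r (φ (r σ)) (Icc 0 (s b)) σ := fun σ hσ => by
    simpa only [inv_inv] using hasDerivWithinAt_of_invOn_of_strictMonoOn hs_mono
      (hs_eq ▸ fun x hx => hasDerivWithinAt_integral_Icc hφinv hx)
      (fun x hx => inv_ne_zero (hφpos x hx).ne') hsJ hr ⟨hrs, hsr⟩ hσ
  have hlφ' : ∀ t ∈ Icc a b, lφ' t = φ' t / φ t := fun t ht =>
    (uniqueDiffOn_Icc hab t ht).eq_deriv _ (hlog1 t ht) ((hφd t ht).log (hφpos t ht).ne')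
  have hG : ∀ σ ∈ Icc 0 (s b), ψ' σ / ψ σ ^ 2 = lφ' (r σ) := by
    intro σ hσ
    have hψ' : ψ' σ = φ' (r σ) * φ (r σ) :=
      (uniqueDiffOn_Icc hsb σ hσ).eq_deriv _ (hψd σ hσ)
        (funext hψ ▸ (hφd _ (hr hσ)).comp σ (hr' σ hσ) hr)
    rw [hψ', hψ, hlφ' _ (hr hσ)]
    field_simp [(hφpos _ (hr hσ)).ne']
  have hG' : ∀ σ ∈ Icc 0 (s b), HasDerivWithinAt (fun τ => ψ' τ / ψ τ ^ 2)
      (φ (r σ) * lφ'' (r σ)) (Icc 0 (s b)) σ := fun σ hσ => by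
    rw [mul_comm]
    exact ((hlog2 _ (hr hσ)).comp σ (hr' σ hσ) hr).congr hG (hG σ hσ)
  refine ⟨fun σ hσ => (hG σ hσ).trans (hlφ' _ (hr hσ)), hG',
    (antitoneOn_iff_hasDerivWithinAt_nonpos (convex_Icc _ _) (uniqueDiffOn_Icc hsb) hG').trans ?_⟩
  rw [(LeftInvOn.surjOn hrs hsJ).forall hr]
  exact forall₂_congr fun σ hσ => by
    simpa using mul_le_mul_iff_right₀ (b := lφ'' (r σ)) (c := 0) (hφpos _ (hr hσ))

/-- Let `a < b`, `φ : [a,b] → ℝ` be positive and twice continuously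
differentiable (with first derivative `φ'`, and with `lφ'`, `lφ''` the first and second
derivatives of `log ∘ φ`, `lφ''` continuous).  Let `s r = ∫_a^r φ(t)⁻¹ dt`, let `r` be the
inverse of `s : [a,b] → [0, s b]`, and let `ψ σ = φ (r σ)` with derivative `ψ'`.  Then for
every `σ ∈ [0, s b]` one has `ψ'(σ)/ψ(σ)² = φ'(r σ)/φ(r σ)`, the derivative of
`σ ↦ ψ'(σ)/ψ(σ)²` at `σ` equals `φ(r σ) * (log ∘ φ)''(r σ)`, and `σ ↦ ψ'(σ)/ψ(σ)²` is
nonincreasing on `[0, s b]` if and only if `(log ∘ φ)'' ≤ 0` on `[a,b]`. -/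
theorem warping_logconcavity_reparam
    (a b : ℝ) (hab : a < b)
    (φ φ' lφ' lφ'' : ℝ → ℝ)
    (hφpos : ∀ t ∈ Icc a b, 0 < φ t)
    (hφd : ∀ t ∈ Icc a b, HasDerivWithinAt φ (φ' t) (Icc a b) t)
    (hlog1 : ∀ t ∈ Icc a b, HasDerivWithinAt (Real.log ∘ φ) (lφ' t) (Icc a b) t)
    (hlog2 : ∀ t ∈ Icc a b, HasDerivWithinAt lφ' (lφ'' t) (Icc a b) t)
    (hlogc : ContinuousOn lφ'' (Icc a b))
    (s : ℝ → ℝ) (hs : ∀ x, s x = ∫ t in a..x, (φ t)⁻¹)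
    (r : ℝ → ℝ)
    (hrmem : ∀ σ ∈ Icc 0 (s b), r σ ∈ Icc a b)
    (hrs : ∀ x ∈ Icc a b, r (s x) = x)
    (hsr : ∀ σ ∈ Icc 0 (s b), s (r σ) = σ)
    (ψ ψ' : ℝ → ℝ) (hψ : ∀ σ, ψ σ = φ (r σ))
    (hψd : ∀ σ ∈ Icc 0 (s b), HasDerivWithinAt ψ (ψ' σ) (Icc 0 (s b)) σ) :
    (∀ σ ∈ Icc 0 (s b), ψ' σ / (ψ σ) ^ 2 = φ' (r σ) / φ (r σ)) ∧
    (∀ σ ∈ Icc 0 (s b),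
      HasDerivWithinAt (fun τ => ψ' τ / (ψ τ) ^ 2)
        (φ (r σ) * lφ'' (r σ)) (Icc 0 (s b)) σ) ∧
    (AntitoneOn (fun τ => ψ' τ / (ψ τ) ^ 2) (Icc 0 (s b)) ↔
      ∀ t ∈ Icc a b, lφ'' t ≤ 0) :=
  warping_logconcavity_reparam_general a b hab φ φ' lφ' lφ'' hφpos hφd hlog1 hlog2 s hs r hrmem hrs
    hsr ψ ψ' hψ hψd
end
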